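/- arXiv:1511.07279 — 2 statements merged into one kernel-verified Lean document; each statement's English description precedes it below -/
import Mathlib

section
/- For all α > 0 and κ₀ > 0 there exists a constant C > 0, depending only on α and κ₀, with the following property: for every finite weighted network whose weights satisfy κ j ≥ κ₀ for all edges j, and for all functions c, u on the network such that each c j is twice continuously differentiable on [0,1], each u j is continuous on [0,1], −(c j)'' = u j − α·c j on [0,1] for every j, c satisfies the Kirchhoff condition at every vertex, and c j ≥ 0, u j ≥ 0 on [0,1] for every j, one has max_j sup_{x∈[0,1]} (|c j(x)| + |(c j)'(x)|) ≤ C·M, where M := ∑_j κ j ∫₀¹ u j(x) dx. -/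
/-!
Integrating `-c'' = u - α c` over each edge and summing with the weights `κ`, the Kirchhoff
conditions cancel all boundary fluxes, so `α ∑ κ_j ∫ c_j = M`. As `κ_j ≥ κ₀` and all terms are
nonnegative, every edge has `∫ c_j ≤ M / (α κ₀)` and `∫ |c_j''| ≤ α ∫ c_j + ∫ u_j ≤ 2 M / κ₀`.
These two integrals control a nonnegative `C²` function `f` on `[0,1]` in `W^{1,∞}`: `f ≤ 3 ∫ f`
at some point of `[0,1/3]` and at some point of `[2/3,1]`, the mean value theorem between these
points bounds `f'` at one point, `∫ |f''|` spreads this bound over the whole edge, and then the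
bound on `f'` bounds `f`.
-/

open Finset MeasureTheory Set

section Interval

variable {f f' : ℝ → ℝ} {a b : ℝ}

theorem exists_mem_Icc_mul_le_integral (hab : a ≤ b) (hf : ContinuousOn f (Icc a b)) :
    ∃ t ∈ Icc a b, (b - a) * f t ≤ ∫ x in a..b, f x := by
  obtain ⟨t, ht, hmin⟩ := isCompact_Icc.exists_isMinOn (nonempty_Icc.2 hab) hf
  refine ⟨t, ht, ?_⟩
  calc (b - a) * f t = ∫ _ in a..b, f t := by simp
    _ ≤ ∫ x in a..b, f x :=
      intervalIntegral.integral_mono_on hab intervalIntegrable_const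
        (hf.intervalIntegrable_of_Icc hab) fun x hx => hmin hx

theorem integral_eq_sub_of_hasDerivWithinAt_Icc
    (hf : ∀ x ∈ Icc a b, HasDerivWithinAt f (f' x) (Icc a b) x)
    (hf' : ContinuousOn f' (Icc a b)) {x y : ℝ} (hx : x ∈ Icc a b) (hy : y ∈ Icc a b) :
    ∫ t in x..y, f' t = f y - f x := by
  have hsub : uIcc x y ⊆ Icc a b := uIcc_subset_Icc hx hy
  have hfC : ContinuousOn f (Icc a b) := fun t ht => (hf t ht).continuousWithinAt
  refine intervalIntegral.integral_eq_sub_of_hasDeriv_right (hfC.mono hsub) (fun t ht => ?_)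
    ((hf'.mono hsub).intervalIntegrable)
  have ht' : t ∈ Ioo a b :=
    ⟨(le_min hx.1 hy.1).trans_lt ht.1, ht.2.trans_le (max_le hx.2 hy.2)⟩
  exact ((hf t (Ioo_subset_Icc_self ht')).hasDerivAt (Icc_mem_nhds ht'.1 ht'.2)).hasDerivWithinAt

theorem abs_sub_le_integral_abs_of_hasDerivWithinAt_Icc
    (hf : ∀ x ∈ Icc a b, HasDerivWithinAt f (f' x) (Icc a b) x)
    (hf' : ContinuousOn f' (Icc a b)) {x y : ℝ} (hx : x ∈ Icc a b) (hy : y ∈ Icc a b) :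
    |f y - f x| ≤ ∫ t in a..b, |f' t| := by
  have hab : a ≤ b := hx.1.trans hx.2
  rw [← integral_eq_sub_of_hasDerivWithinAt_Icc hf hf' hx hy]
  calc |∫ t in x..y, f' t| ≤ |∫ t in x..y, (|f' t|)| := by
        simpa only [Real.norm_eq_abs] using
          intervalIntegral.norm_integral_le_abs_integral_norm (f := f') (μ := volume)
    _ ≤ |∫ t in a..b, (|f' t|)| := by
        refine intervalIntegral.abs_integral_mono_interval ?_
          (Filter.Eventually.of_forall fun t => abs_nonneg (f' t))
          (hf'.intervalIntegrable_of_Icc hab).abs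
        refine uIoc_subset_uIoc_of_uIcc_subset_uIcc ?_
        rw [uIcc_of_le hab]
        exact uIcc_subset_Icc hx hy
    _ = ∫ t in a..b, |f' t| :=
        abs_of_nonneg (intervalIntegral.integral_nonneg hab fun t _ => abs_nonneg _)

end Interval

theorem abs_add_abs_deriv_le_of_nonneg {f f' f'' : ℝ → ℝ}
    (hf : ∀ x ∈ Icc (0:ℝ) 1, HasDerivWithinAt f (f' x) (Icc 0 1) x)
    (hf' : ∀ x ∈ Icc (0:ℝ) 1, HasDerivWithinAt f' (f'' x) (Icc 0 1) x)
    (hf'' : ContinuousOn f'' (Icc 0 1)) (hf0 : ∀ x ∈ Icc (0:ℝ) 1, 0 ≤ f x)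
    {x : ℝ} (hx : x ∈ Icc (0:ℝ) 1) :
    |f x| + |f' x| ≤ 21 * (∫ t in (0:ℝ)..1, f t) + 2 * ∫ t in (0:ℝ)..1, |f'' t| := by
  set A := ∫ t in (0:ℝ)..1, f t
  set D := ∫ t in (0:ℝ)..1, |f'' t|
  have hfC : ContinuousOn f (Icc 0 1) := fun y hy => (hf y hy).continuousWithinAt
  have hsmall : ∀ p q : ℝ, 0 ≤ p → p ≤ q → q ≤ 1 → ∃ t ∈ Icc p q, (q - p) * f t ≤ A := by
    intro p q hp hpq hq
    obtain ⟨t, ht, hle⟩ := exists_mem_Icc_mul_le_integral hpq (hfC.mono (Icc_subset_Icc hp hq))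
    refine ⟨t, ht, hle.trans (intervalIntegral.integral_mono_interval hp hpq hq ?_
      (hfC.intervalIntegrable_of_Icc zero_le_one))⟩
    filter_upwards [ae_restrict_mem measurableSet_Ioc] with y hy
    exact hf0 y (Ioc_subset_Icc_self hy)
  obtain ⟨a, ha, hfa⟩ := hsmall 0 (1/3) le_rfl (by norm_num) (by norm_num)
  obtain ⟨b, hb, hfb⟩ := hsmall (2/3) 1 (by norm_num) (by norm_num) le_rfl
  have ha' : a ∈ Icc (0:ℝ) 1 := ⟨ha.1, ha.2.trans (by norm_num)⟩
  have hb' : b ∈ Icc (0:ℝ) 1 := ⟨hb.1.trans' (by norm_num), hb.2⟩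
  obtain ⟨η, hη, hslope⟩ := exists_hasDerivAt_eq_slope f f' (by linarith [ha.2, hb.1] : a < b)
    (hfC.mono (Icc_subset_Icc ha'.1 hb'.2))
    (fun t ht => (hf t ⟨ha'.1.trans ht.1.le, ht.2.le.trans hb'.2⟩).hasDerivAt
      (Icc_mem_nhds (ha'.1.trans_lt ht.1) (ht.2.trans_le hb'.2)))
  have hη : η ∈ Icc (0:ℝ) 1 := ⟨ha'.1.trans hη.1.le, hη.2.le.trans hb'.2⟩
  have hf'η : |f' η| ≤ 9 * A := by
    have hba : 1/3 ≤ b - a := by linarith [ha.2, hb.1]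
    rw [hslope, abs_div, abs_of_pos (show 0 < b - a by linarith), div_le_iff₀ (by linarith),
      abs_sub_le_iff]
    have := hf0 a ha'; have := hf0 b hb'
    constructor <;> nlinarith
  have hf'bound : ∀ y ∈ Icc (0:ℝ) 1, |f' y| ≤ 9 * A + D := fun y hy => by
    have := abs_sub_le_integral_abs_of_hasDerivWithinAt_Icc hf' hf'' hη hy
    linarith [abs_sub_abs_le_abs_sub (f' y) (f' η)]
  have hfx : |f x - f a| ≤ 9 * A + D := by
    have hxa : |x - a| ≤ 1 :=
      abs_sub_le_iff.2 ⟨by linarith [hx.2, ha'.1], by linarith [ha'.2, hx.1]⟩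
    calc |f x - f a| ≤ (9 * A + D) * |x - a| :=
          (convex_Icc (0:ℝ) 1).norm_image_sub_le_of_norm_hasDerivWithin_le hf hf'bound ha' hx
      _ ≤ 9 * A + D := mul_le_of_le_one_right ((abs_nonneg _).trans (hf'bound x hx)) hxa
  rw [abs_of_nonneg (hf0 x hx)]
  linarith [hf'bound x hx, (abs_le.1 hfx).2]

section EdgeEquation

variable {α a b : ℝ} {c c2 u : ℝ → ℝ}

theorem sub_eq_mul_integral_sub_integral {c1 : ℝ → ℝ} (hab : a ≤ b)
    (hc1 : ∀ x ∈ Icc a b, HasDerivWithinAt c1 (c2 x) (Icc a b) x)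
    (hc2 : ContinuousOn c2 (Icc a b)) (hc : ContinuousOn c (Icc a b))
    (hu : ContinuousOn u (Icc a b)) (heq : ∀ x ∈ Icc a b, -c2 x = u x - α * c x) :
    c1 b - c1 a = α * (∫ x in a..b, c x) - ∫ x in a..b, u x := by
  rw [← integral_eq_sub_of_hasDerivWithinAt_Icc hc1 hc2 (left_mem_Icc.2 hab)
      (right_mem_Icc.2 hab), ← intervalIntegral.integral_const_mul,
    ← intervalIntegral.integral_sub ((hc.intervalIntegrable_of_Icc hab).const_mul α)
      (hu.intervalIntegrable_of_Icc hab)]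
  refine intervalIntegral.integral_congr fun x hx => ?_
  rw [uIcc_of_le hab] at hx
  linarith [heq x hx]

theorem integral_abs_le_mul_integral_add_integral (hab : a ≤ b) (hα : 0 ≤ α)
    (hc2 : ContinuousOn c2 (Icc a b)) (hc : ContinuousOn c (Icc a b))
    (hu : ContinuousOn u (Icc a b)) (heq : ∀ x ∈ Icc a b, -c2 x = u x - α * c x)
    (hc0 : ∀ x ∈ Icc a b, 0 ≤ c x) (hu0 : ∀ x ∈ Icc a b, 0 ≤ u x) :
    ∫ x in a..b, |c2 x| ≤ α * (∫ x in a..b, c x) + ∫ x in a..b, u x := by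
  have hci := (hc.intervalIntegrable_of_Icc (μ := volume) hab).const_mul α
  have hui := hu.intervalIntegrable_of_Icc (μ := volume) hab
  rw [← intervalIntegral.integral_const_mul, ← intervalIntegral.integral_add hci hui]
  refine intervalIntegral.integral_mono_on hab (hc2.intervalIntegrable_of_Icc hab).abs
    (hci.add hui) fun x hx => ?_
  have := heq x hx
  have := mul_nonneg hα (hc0 x hx)
  have := hu0 x hx
  rw [abs_le]
  constructor <;> linarith

end EdgeEquation

theorem sum_eq_sum_of_fiberwise_sub_eq_zero {ι V M : Type*} [Fintype ι]
    [Fintype V] [DecidableEq V] [AddCommGroup M] (I T : ι → V) (g h : ι → M)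
    (hkir : ∀ v, ∑ j ∈ univ.filter (fun j => T j = v), g j
      - ∑ j ∈ univ.filter (fun j => I j = v), h j = 0) :
    ∑ j, g j = ∑ j, h j := by
  rw [← sum_fiberwise univ T g, ← sum_fiberwise univ I h, ← sub_eq_zero, ← sum_sub_distrib]
  exact sum_eq_zero fun v _ => hkir v

theorem mul_le_sum_mul_of_le {ι : Type*} [Fintype ι] {κ w : ι → ℝ} {κ₀ : ℝ} (hκ₀ : 0 ≤ κ₀)
    (hκ : ∀ i, κ₀ ≤ κ i) (hw : ∀ i, 0 ≤ w i) (j : ι) : κ₀ * w j ≤ ∑ i, κ i * w i :=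
  (mul_le_mul_of_nonneg_right (hκ j) (hw j)).trans
    (single_le_sum (fun i _ => mul_nonneg (hκ₀.trans (hκ i)) (hw i)) (mem_univ j))

theorem mul_sum_mul_integral_eq_of_kirchhoff {ι V : Type*} [Fintype ι] [Fintype V]
    [DecidableEq V] {α : ℝ} (I T : ι → V) (κ : ι → ℝ) {c u c1 c2 : ι → ℝ → ℝ}
    (hc : ∀ i, ContinuousOn (c i) (Icc 0 1))
    (hc1 : ∀ i, ∀ x ∈ Icc (0:ℝ) 1, HasDerivWithinAt (c1 i) (c2 i x) (Icc 0 1) x)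
    (hc2 : ∀ i, ContinuousOn (c2 i) (Icc 0 1)) (hu : ∀ i, ContinuousOn (u i) (Icc 0 1))
    (heq : ∀ i, ∀ x ∈ Icc (0:ℝ) 1, -c2 i x = u i x - α * c i x)
    (hkir : ∀ v, ∑ i ∈ univ.filter (fun i => T i = v), κ i * c1 i 1
      - ∑ i ∈ univ.filter (fun i => I i = v), κ i * c1 i 0 = 0) :
    α * ∑ i, κ i * (∫ x in (0:ℝ)..1, c i x) = ∑ i, κ i * ∫ x in (0:ℝ)..1, u i x := by
  have hflux := sum_eq_sum_of_fiberwise_sub_eq_zero I T _ _ hkir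
  calc α * ∑ i, κ i * (∫ x in (0:ℝ)..1, c i x)
      = ∑ i, (κ i * c1 i 1 - κ i * c1 i 0 + κ i * ∫ x in (0:ℝ)..1, u i x) := by
        rw [mul_sum]
        refine sum_congr rfl fun i _ => ?_
        rw [← mul_sub, sub_eq_mul_integral_sub_integral zero_le_one (hc1 i) (hc2 i) (hc i) (hu i)
          (heq i)]
        ring
    _ = ∑ i, κ i * ∫ x in (0:ℝ)..1, u i x := by
        rw [sum_add_distrib, sum_sub_distrib, hflux, sub_self, zero_add]

/-- **Uniform `W^{1,∞}` bound for the chemical concentration.**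
For all `α > 0`, `κ₀ > 0` there is `C > 0`, depending only on `α` and `κ₀`, such that on
any finite weighted network with weights `κ_j ≥ κ₀`, any nonnegative solution `(c,u)` of
`−c_j'' = u_j − α c_j` on each edge (with `c1 = c'`, `c2 = c''`, `u` continuous, `c`
satisfying the Kirchhoff condition at every vertex) satisfies
`max_j sup_{x∈[0,1]} (|c_j(x)| + |c_j'(x)|) ≤ C·M`, where `M = ∑_j κ_j ∫₀¹ u_j`. -/
theorem stmt_13 (α κ₀ : ℝ) (hα : 0 < α) (hκ₀ : 0 < κ₀) :
    ∃ C > 0, ∀ (n m : ℕ) (_ : 1 ≤ m) (eI eT : Fin m → Fin n) (_ : ∀ j, eI j ≠ eT j)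
      (κ : Fin m → ℝ) (_ : ∀ j, κ₀ ≤ κ j) (c u c1 c2 : Fin m → ℝ → ℝ),
      -- c is twice continuously differentiable on [0,1], with c1 = c', c2 = c''
      (∀ j, ∀ x ∈ Set.Icc (0:ℝ) 1, HasDerivWithinAt (c j) (c1 j x) (Set.Icc 0 1) x) →
      (∀ j, ∀ x ∈ Set.Icc (0:ℝ) 1, HasDerivWithinAt (c1 j) (c2 j x) (Set.Icc 0 1) x) →
      (∀ j, ContinuousOn (c2 j) (Set.Icc 0 1)) →
      -- u is continuous on [0,1]
      (∀ j, ContinuousOn (u j) (Set.Icc 0 1)) →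
      -- the elliptic equation −c'' = u − α c
      (∀ j, ∀ x ∈ Set.Icc (0:ℝ) 1, -(c2 j x) = u j x - α * c j x) →
      -- Kirchhoff condition for c at every vertex
      (∀ v : Fin n,
        ∑ j ∈ univ.filter (fun j => eT j = v), κ j * c1 j 1
          - ∑ j ∈ univ.filter (fun j => eI j = v), κ j * c1 j 0 = 0) →
      -- nonnegativity
      (∀ j, ∀ x ∈ Set.Icc (0:ℝ) 1, 0 ≤ c j x) →
      (∀ j, ∀ x ∈ Set.Icc (0:ℝ) 1, 0 ≤ u j x) →
      ∀ j, ∀ x ∈ Set.Icc (0:ℝ) 1,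
        |c j x| + |c1 j x| ≤ C * ∑ i, κ i * ∫ y in (0:ℝ)..1, u i y := by
  refine ⟨21 / (α * κ₀) + 4 / κ₀, by positivity, ?_⟩
  intro n m _ eI eT _ κ hκ c u c1 c2 hc hc1 hc2 hu heq hkir hc0 hu0 j x hx
  have hcC : ∀ i, ContinuousOn (c i) (Icc 0 1) := fun i y hy =>
    (hc i y hy).continuousWithinAt
  have hbalance := mul_sum_mul_integral_eq_of_kirchhoff eI eT κ hcC hc1 hc2 hu heq hkir
  set M := ∑ i, κ i * ∫ y in (0:ℝ)..1, u i y
  have hcj : ∫ y in (0:ℝ)..1, c j y ≤ M / κ₀ / α := by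
    rw [le_div_iff₀ hα, le_div_iff₀ hκ₀, ← hbalance]
    have := mul_le_sum_mul_of_le (w := fun i => ∫ y in (0:ℝ)..1, c i y) hκ₀.le hκ
      (fun i => intervalIntegral.integral_nonneg zero_le_one (hc0 i)) j
    linarith [mul_le_mul_of_nonneg_left this hα.le]
  have hαcj : α * ∫ y in (0:ℝ)..1, c j y ≤ M / κ₀ := by
    rwa [le_div_iff₀ hα, mul_comm] at hcj
  have huj : ∫ y in (0:ℝ)..1, u j y ≤ M / κ₀ := by
    rw [le_div_iff₀ hκ₀, mul_comm]
    exact mul_le_sum_mul_of_le hκ₀.le hκ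
      (fun i => intervalIntegral.integral_nonneg zero_le_one (hu0 i)) j
  calc |c j x| + |c1 j x|
      ≤ 21 * (∫ y in (0:ℝ)..1, c j y) + 2 * ∫ y in (0:ℝ)..1, |c2 j y| :=
        abs_add_abs_deriv_le_of_nonneg (hc j) (hc1 j) (hc2 j) (hc0 j) hx
    _ ≤ 21 * (M / κ₀ / α) + 2 * (M / κ₀ + M / κ₀) := by
        linarith [integral_abs_le_mul_integral_add_integral zero_le_one hα.le (hc2 j) (hcC j)
          (hu j) (heq j) (hc0 j) (hu0 j)]
    _ = (21 / (α * κ₀) + 4 / κ₀) * M := by field_simp; ring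
end

section
/- Let α > 0 and let w, z be functions on a finite weighted network such that each w j is twice continuously differentiable on [0,1], each z j is continuous on [0,1] with z j ≥ 0, −(w j)'' = z j − α·w j on [0,1] for every j, w is continuous at the vertices, and w satisfies the Kirchhoff condition at every vertex. Then max_j sup_{x∈[0,1]} |(w j)''(x)| ≤ sup_{i, y∈[0,1]} z i(y). -/
/-!
At a global maximum of `w` over the whole network, `w'' ≤ 0`. Inside an edge this is the
second-derivative test. At a vertex carrying the maximum, every incoming edge has `w'(1) ≥ 0`
and every outgoing edge `w'(0) ≤ 0`, so the Kirchhoff sum vanishes only if all these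
derivatives vanish; then the one-sided second-derivative test applies. Since `w'' = α w - z`,
this gives `α max w ≤ z ≤ sup z`, and the same argument for `-w` gives `α min w ≥ z ≥ 0`.
Together they confine `w'' = α w - z` to `[-sup z, sup z]`.
-/

open Finset Topology

theorem IsMaxOn.hasDerivWithinAt_mul_sub_nonpos {f : ℝ → ℝ} {f' c x : ℝ} {s : Set ℝ}
    (hmax : IsMaxOn f s c) (hs : Convex ℝ s) (hc : c ∈ s) (hx : x ∈ s)
    (hf : HasDerivWithinAt f f' s c) : f' * (x - c) ≤ 0 := by
  simpa [mul_comm] using hmax.localize.hasFDerivWithinAt_nonpos hf.hasFDerivWithinAt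
    (sub_mem_posTangentConeAt_of_segment_subset (hs.segment_subset hc hx))

theorem IsMaxOn.hasDerivWithinAt_eq_zero_of_mem_Ioo {f : ℝ → ℝ} {f' a b c : ℝ}
    (hmax : IsMaxOn f (Set.Icc a b) c) (hc : c ∈ Set.Ioo a b)
    (hf : HasDerivWithinAt f f' (Set.Icc a b) c) : f' = 0 :=
  (hmax.localize.isLocalMax (Icc_mem_nhds hc.1 hc.2)).hasDerivAt_eq_zero
    (hf.hasDerivAt (Icc_mem_nhds hc.1 hc.2))

theorem second_deriv_nonpos_of_isMaxOn_Icc {f f' : ℝ → ℝ} {f'' a b c : ℝ} (hab : a < b)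
    (hmax : IsMaxOn f (Set.Icc a b) c) (hc : c ∈ Set.Icc a b)
    (hf : ∀ x ∈ Set.Icc a b, HasDerivWithinAt f (f' x) (Set.Icc a b) x)
    (hf' : HasDerivWithinAt f' f'' (Set.Icc a b) c) (hcrit : f' c = 0) : f'' ≤ 0 := by
  by_contra! hpos
  -- `f'` has the sign of `x - c` near `c`, so `f` increases on both sides of `c`
  obtain ⟨δ, hδ, hsign⟩ : ∃ δ > 0, ∀ x ∈ Set.Icc a b, x ≠ c → |x - c| < δ →
      0 < f' x * (x - c) := by
    have := (hasDerivWithinAt_iff_tendsto_slope.mp hf').eventually (lt_mem_nhds hpos)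
    obtain ⟨δ, hδ, hball⟩ := Metric.eventually_nhds_iff.mp (eventually_nhdsWithin_iff.mp this)
    refine ⟨δ, hδ, fun x hx hxc hdist => ?_⟩
    have hslope := hball (by rwa [Real.dist_eq]) ⟨hx, hxc⟩
    have hne : x - c ≠ 0 := sub_ne_zero.mpr hxc
    rw [slope_def_field, hcrit, sub_zero] at hslope
    calc 0 < f' x / (x - c) * ((x - c) * (x - c)) := mul_pos hslope (mul_self_pos.mpr hne)
      _ = f' x * (x - c) := by field_simp
  have hcont : ContinuousOn f (Set.Icc a b) := fun x hx => (hf x hx).continuousWithinAt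
  have hderiv : ∀ {p q}, Set.Icc p q ⊆ Set.Icc a b → ∀ x ∈ interior (Set.Icc p q),
      HasDerivWithinAt f (f' x) (interior (Set.Icc p q)) x := fun hpq x hx =>
    (hf x (hpq (interior_subset hx))).mono (interior_subset.trans hpq)
  rcases hc.2.lt_or_eq with hcb | rfl
  · set x := min b (c + δ / 2)
    have hcx : c < x := lt_min hcb (by linarith)
    have hsub : Set.Icc c x ⊆ Set.Icc a b := Set.Icc_subset_Icc hc.1 (min_le_left _ _)
    have hmono : StrictMonoOn f (Set.Icc c x) := by
      refine strictMonoOn_of_hasDerivWithinAt_pos (convex_Icc c x) (hcont.mono hsub)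
        (hderiv hsub) fun y hy => ?_
      rw [interior_Icc] at hy
      have hyx : y - c < δ := by linarith [hy.2, min_le_right b (c + δ / 2)]
      exact pos_of_mul_pos_left (hsign y (hsub (Set.Ioo_subset_Icc_self hy)) hy.1.ne'
        (by rw [abs_of_pos (by linarith [hy.1])]; exact hyx)) (by linarith [hy.1])
    exact (hmono (Set.left_mem_Icc.mpr hcx.le) (Set.right_mem_Icc.mpr hcx.le) hcx).not_ge
      (hmax (hsub (Set.right_mem_Icc.mpr hcx.le)))
  · set x := max a (c - δ / 2)
    have hxc : x < c := max_lt hab (by linarith)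
    have hsub : Set.Icc x c ⊆ Set.Icc a c := Set.Icc_subset_Icc (le_max_left _ _) le_rfl
    have hanti : StrictAntiOn f (Set.Icc x c) := by
      refine strictAntiOn_of_hasDerivWithinAt_neg (convex_Icc x c) (hcont.mono hsub)
        (hderiv hsub) fun y hy => ?_
      rw [interior_Icc] at hy
      have hyx : c - y < δ := by linarith [hy.1, le_max_right a (c - δ / 2)]
      exact neg_of_mul_pos_left (hsign y (hsub (Set.Ioo_subset_Icc_self hy)) hy.2.ne
        (by rw [abs_of_neg (by linarith [hy.2])]; linarith)) (by linarith [hy.2])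
    exact (hanti (Set.left_mem_Icc.mpr hxc.le) (Set.right_mem_Icc.mpr hxc.le) hxc).not_ge
      (hmax (hsub (Set.left_mem_Icc.mpr hxc.le)))

theorem Finset.forall_eq_zero_of_sum_sub_sum_eq_zero {ι M : Type*} [AddCommGroup M]
    [PartialOrder M] [IsOrderedAddMonoid M] {s t : Finset ι} {f g : ι → M}
    (hf : ∀ i ∈ s, 0 ≤ f i) (hg : ∀ i ∈ t, g i ≤ 0)
    (h : ∑ i ∈ s, f i - ∑ i ∈ t, g i = 0) :
    (∀ i ∈ s, f i = 0) ∧ ∀ i ∈ t, g i = 0 := by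
  have hs := sum_nonneg hf
  have ht := sum_nonpos hg
  have hst : ∑ i ∈ s, f i = ∑ i ∈ t, g i := sub_eq_zero.mp h
  exact ⟨(sum_eq_zero_iff_of_nonneg hf).mp (le_antisymm (hst ▸ ht) hs),
    (sum_eq_zero_iff_of_nonpos hg).mp (le_antisymm ht (hst ▸ hs))⟩

theorem IsCompact.exists_forall_le_of_finite {ι X α : Type*} [Finite ι] [Nonempty ι]
    [TopologicalSpace X] [LinearOrder α] [TopologicalSpace α] [ClosedIciTopology α]
    {K : Set X} (hK : IsCompact K) (hne : K.Nonempty) {f : ι → X → α}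
    (hf : ∀ i, ContinuousOn (f i) K) :
    ∃ j, ∃ c ∈ K, ∀ i, ∀ x ∈ K, f i x ≤ f j c := by
  choose c hcK hcmax using fun i => hK.exists_isMaxOn hne (hf i)
  obtain ⟨j, hj⟩ := Finite.exists_max fun i => f i (c i)
  exact ⟨j, c j, hcK j, fun i x hx => (hcmax i hx).trans (hj i)⟩

theorem IsCompact.le_iSup_iSup {ι X : Type*} [Finite ι] [TopologicalSpace X] {K : Set X}
    (hK : IsCompact K) {f : ι → X → ℝ} (hf : ∀ i, ContinuousOn (f i) K) (i : ι) {x : X}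
    (hx : x ∈ K) : f i x ≤ ⨆ i, ⨆ y : K, f i y := by
  have hbdd : BddAbove (Set.range fun y : K => f i y) := by
    simpa [Set.image_eq_range] using (hK.image_of_continuousOn (hf i)).bddAbove
  exact (le_ciSup hbdd ⟨x, hx⟩).trans
    (le_ciSup (Set.finite_range fun i => ⨆ y : K, f i y).bddAbove i)

theorem hasDerivWithinAt_eq_zero_of_vertex_max {n m : ℕ} {eI eT : Fin m → Fin n}
    {κ : Fin m → ℝ} (hκ : ∀ j, 0 < κ j) {u u1 : Fin m → ℝ → ℝ}
    (hu1 : ∀ j, ∀ x ∈ Set.Icc (0:ℝ) 1, HasDerivWithinAt (u j) (u1 j x) (Set.Icc 0 1) x)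
    {b : Fin n → ℝ} (hub : ∀ j, u j 0 = b (eI j) ∧ u j 1 = b (eT j)) {v : Fin n}
    (hK : ∑ j ∈ univ.filter (fun j => eT j = v), κ j * u1 j 1
        - ∑ j ∈ univ.filter (fun j => eI j = v), κ j * u1 j 0 = 0)
    (hmax : ∀ j, ∀ x ∈ Set.Icc (0:ℝ) 1, u j x ≤ b v) :
    (∀ j, eT j = v → u1 j 1 = 0) ∧ ∀ j, eI j = v → u1 j 0 = 0 := by
  have h0 : (0:ℝ) ∈ Set.Icc (0:ℝ) 1 := Set.left_mem_Icc.mpr zero_le_one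
  have h1 : (1:ℝ) ∈ Set.Icc (0:ℝ) 1 := Set.right_mem_Icc.mpr zero_le_one
  have hmaxOn : ∀ j c, u j c = b v → IsMaxOn (u j) (Set.Icc 0 1) c :=
    fun j c hc x hx => hc ▸ hmax j x hx
  have hin : ∀ j ∈ univ.filter (fun j => eT j = v), 0 ≤ κ j * u1 j 1 := fun j hj => by
    have := (hmaxOn j 1 ((hub j).2.trans (congrArg b (mem_filter.mp hj).2))
      ).hasDerivWithinAt_mul_sub_nonpos (convex_Icc 0 1) h1 h0 (hu1 j 1 h1)
    exact mul_nonneg (hκ j).le (by linarith)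
  have hout : ∀ j ∈ univ.filter (fun j => eI j = v), κ j * u1 j 0 ≤ 0 := fun j hj => by
    have := (hmaxOn j 0 ((hub j).1.trans (congrArg b (mem_filter.mp hj).2))
      ).hasDerivWithinAt_mul_sub_nonpos (convex_Icc 0 1) h0 h1 (hu1 j 0 h0)
    exact mul_nonpos_of_nonneg_of_nonpos (hκ j).le (by linarith)
  obtain ⟨hin0, hout0⟩ := forall_eq_zero_of_sum_sub_sum_eq_zero hin hout hK
  exact ⟨fun j hj => (mul_eq_zero.mp (hin0 j (by simp [hj]))).resolve_left (hκ j).ne',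
    fun j hj => (mul_eq_zero.mp (hout0 j (by simp [hj]))).resolve_left (hκ j).ne'⟩

theorem exists_isMax_second_deriv_nonpos {n m : ℕ} [Nonempty (Fin m)] {eI eT : Fin m → Fin n}
    {κ : Fin m → ℝ} (hκ : ∀ j, 0 < κ j) {u u1 u2 : Fin m → ℝ → ℝ}
    (hu1 : ∀ j, ∀ x ∈ Set.Icc (0:ℝ) 1, HasDerivWithinAt (u j) (u1 j x) (Set.Icc 0 1) x)
    (hu2 : ∀ j, ∀ x ∈ Set.Icc (0:ℝ) 1, HasDerivWithinAt (u1 j) (u2 j x) (Set.Icc 0 1) x)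
    {b : Fin n → ℝ} (hub : ∀ j, u j 0 = b (eI j) ∧ u j 1 = b (eT j))
    (hK : ∀ v : Fin n,
      ∑ j ∈ univ.filter (fun j => eT j = v), κ j * u1 j 1
        - ∑ j ∈ univ.filter (fun j => eI j = v), κ j * u1 j 0 = 0) :
    ∃ j, ∃ c ∈ Set.Icc (0:ℝ) 1,
      (∀ i, ∀ x ∈ Set.Icc (0:ℝ) 1, u i x ≤ u j c) ∧ u2 j c ≤ 0 := by
  obtain ⟨j, c, hc, hmax⟩ := isCompact_Icc.exists_forall_le_of_finite
    (Set.nonempty_Icc.mpr zero_le_one) fun j x hx => (hu1 j x hx).continuousWithinAt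
  have hcrit : u1 j c = 0 := by
    rcases hc.1.eq_or_lt with rfl | hc0
    · exact (hasDerivWithinAt_eq_zero_of_vertex_max hκ hu1 hub (hK (eI j))
        fun i x hx => (hub j).1 ▸ hmax i x hx).2 j rfl
    rcases hc.2.eq_or_lt with rfl | hc1
    · exact (hasDerivWithinAt_eq_zero_of_vertex_max hκ hu1 hub (hK (eT j))
        fun i x hx => (hub j).2 ▸ hmax i x hx).1 j rfl
    exact IsMaxOn.hasDerivWithinAt_eq_zero_of_mem_Ioo (fun x hx => hmax j x hx) ⟨hc0, hc1⟩
      (hu1 j c hc)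
  exact ⟨j, c, hc, hmax, second_deriv_nonpos_of_isMaxOn_Icc zero_lt_one
    (fun x hx => hmax j x hx) hc (hu1 j) (hu2 j c hc) hcrit⟩

theorem stmt_15_general (n m : ℕ) (eI eT : Fin m → Fin n)
    (κ : Fin m → ℝ) (hκ : ∀ j, 0 < κ j) (α : ℝ) (hα : 0 < α)
    (w z w1 w2 : Fin m → ℝ → ℝ)
    -- w is twice continuously differentiable on [0,1], with w1 = w', w2 = w''
    (hw1 : ∀ j, ∀ x ∈ Set.Icc (0:ℝ) 1, HasDerivWithinAt (w j) (w1 j x) (Set.Icc 0 1) x)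
    (hw2 : ∀ j, ∀ x ∈ Set.Icc (0:ℝ) 1, HasDerivWithinAt (w1 j) (w2 j x) (Set.Icc 0 1) x)
    -- z is continuous and nonnegative on [0,1]
    (hzcont : ∀ j, ContinuousOn (z j) (Set.Icc 0 1))
    (hzpos : ∀ j, ∀ x ∈ Set.Icc (0:ℝ) 1, 0 ≤ z j x)
    -- the elliptic equation −w'' = z − α w
    (heq : ∀ j, ∀ x ∈ Set.Icc (0:ℝ) 1, -(w2 j x) = z j x - α * w j x)
    -- w is continuous at the vertices
    (b : Fin n → ℝ) (hwb : ∀ j, w j 0 = b (eI j) ∧ w j 1 = b (eT j))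
    -- Kirchhoff condition for w at every vertex
    (hKw : ∀ v : Fin n,
      ∑ j ∈ univ.filter (fun j => eT j = v), κ j * w1 j 1
        - ∑ j ∈ univ.filter (fun j => eI j = v), κ j * w1 j 0 = 0) :
    ∀ j, ∀ x ∈ Set.Icc (0:ℝ) 1,
      |w2 j x| ≤ ⨆ i, ⨆ y : Set.Icc (0:ℝ) 1, z i (y : ℝ) := by
  intro j x hx
  have : Nonempty (Fin m) := ⟨j⟩
  have hzS := fun i y (hy : y ∈ Set.Icc (0:ℝ) 1) => isCompact_Icc.le_iSup_iSup hzcont i hy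
  obtain ⟨j₁, c₁, hc₁, hmax, hw2max⟩ :=
    exists_isMax_second_deriv_nonpos hκ hw1 hw2 hwb hKw
  obtain ⟨j₂, c₂, hc₂, hmin, hw2min⟩ := exists_isMax_second_deriv_nonpos
    (eI := eI) (eT := eT) (u := fun j y => -w j y) (u1 := fun j y => -w1 j y)
    (u2 := fun j y => -w2 j y) (b := fun v => -b v) hκ
    (fun j y hy => (hw1 j y hy).neg) (fun j y hy => (hw2 j y hy).neg)
    (fun j => ⟨by simp [(hwb j).1], by simp [(hwb j).2]⟩)
    (fun v => by simp only [mul_neg, sum_neg_distrib]; linarith [hKw v])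
  have hupper : α * w j x ≤ α * w j₁ c₁ :=
    mul_le_mul_of_nonneg_left (hmax j x hx) hα.le
  have hlower : α * w j₂ c₂ ≤ α * w j x :=
    mul_le_mul_of_nonneg_left (neg_le_neg_iff.mp (hmin j x hx)) hα.le
  rw [abs_le]
  constructor <;> linarith [heq j x hx, heq j₁ c₁ hc₁, heq j₂ c₂ hc₂, hzpos j x hx,
    hzpos j₂ c₂ hc₂, hzS j x hx, hzS j₁ c₁ hc₁]

/-- **Uniform bound on `w''` for the elliptic equation on a network.**
On a finite weighted network, if `−w_j'' = z_j − α w_j` on each edge (with `w1 = w'`,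
`w2 = w''`, `z` continuous and nonnegative edge by edge), `w` is continuous at the
vertices and satisfies the Kirchhoff condition at every vertex, then
`max_j sup_{x∈[0,1]} |w_j''(x)| ≤ sup_{i,y} z_i(y)`. -/
theorem stmt_15 (n m : ℕ) (hm : 1 ≤ m) (eI eT : Fin m → Fin n) (hIT : ∀ j, eI j ≠ eT j)
    (κ : Fin m → ℝ) (hκ : ∀ j, 0 < κ j) (α : ℝ) (hα : 0 < α)
    (w z w1 w2 : Fin m → ℝ → ℝ)
    -- w is twice continuously differentiable on [0,1], with w1 = w', w2 = w''
    (hw1 : ∀ j, ∀ x ∈ Set.Icc (0:ℝ) 1, HasDerivWithinAt (w j) (w1 j x) (Set.Icc 0 1) x)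
    (hw2 : ∀ j, ∀ x ∈ Set.Icc (0:ℝ) 1, HasDerivWithinAt (w1 j) (w2 j x) (Set.Icc 0 1) x)
    (hw2cont : ∀ j, ContinuousOn (w2 j) (Set.Icc 0 1))
    -- z is continuous and nonnegative on [0,1]
    (hzcont : ∀ j, ContinuousOn (z j) (Set.Icc 0 1))
    (hzpos : ∀ j, ∀ x ∈ Set.Icc (0:ℝ) 1, 0 ≤ z j x)
    -- the elliptic equation −w'' = z − α w
    (heq : ∀ j, ∀ x ∈ Set.Icc (0:ℝ) 1, -(w2 j x) = z j x - α * w j x)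
    -- w is continuous at the vertices
    (b : Fin n → ℝ) (hwb : ∀ j, w j 0 = b (eI j) ∧ w j 1 = b (eT j))
    -- Kirchhoff condition for w at every vertex
    (hKw : ∀ v : Fin n,
      ∑ j ∈ univ.filter (fun j => eT j = v), κ j * w1 j 1
        - ∑ j ∈ univ.filter (fun j => eI j = v), κ j * w1 j 0 = 0) :
    ∀ j, ∀ x ∈ Set.Icc (0:ℝ) 1,
      |w2 j x| ≤ ⨆ i, ⨆ y : Set.Icc (0:ℝ) 1, z i (y : ℝ) :=
  stmt_15_general n m eI eT κ hκ α hα w z w1 w2 hw1 hw2 hzcont hzpos heq b hwb hKw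
end
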